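/- arXiv:2008.01223 — 3 statements merged into one kernel-verified Lean document; each statement's English description precedes it below -/
import Mathlib

section
/- Let M be an n×n integer matrix all of whose entries are bounded in absolute value by H, where H ≥ 1, and let φ be the characteristic polynomial of M. Let ψ be any monic polynomial in ℂ[x] dividing φ, with roots λ₁, …, λ_d listed with multiplicity, and let Δ_ψ = ∏_{1 ≤ i < j ≤ d} (λ_i − λ_j)² be its discriminant. Then |Δ_ψ| ≤ H^{n(n−1)} · n^{n²}. -/
set_option maxHeartbeats 1000000

open Polynomial Matrix Finset Module


/- STATEMENT 7: If M is an n×n integer matrix with entries bounded by H ≥ 1 and ψ is a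
monic polynomial over ℂ dividing the characteristic polynomial of M, with roots
λ₁, …, λ_d (with multiplicity), then |Δ_ψ| = |∏_{i<j} (λ_i − λ_j)²| ≤ H^{n(n−1)}·n^{n²}. -/

noncomputable section

lemma hadamard_col (d : ℕ) (f : Fin d → EuclideanSpace ℂ (Fin d)) :
    ‖(Matrix.of fun i j => f j i).det‖ ≤ ∏ j, ‖f j‖ := by
  have hcard : finrank ℂ (EuclideanSpace ℂ (Fin d)) = Fintype.card (Fin d) := by
    simp [finrank_euclideanSpace]
  haveI : WellFoundedLT (Fin d) := inferInstance
  set e : OrthonormalBasis (Fin d) ℂ (EuclideanSpace ℂ (Fin d)) :=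
    EuclideanSpace.basisFun (Fin d) ℂ with he
  set b : OrthonormalBasis (Fin d) ℂ (EuclideanSpace ℂ (Fin d)) :=
    InnerProductSpace.gramSchmidtOrthonormalBasis (𝕜 := ℂ) hcard f with hb
  have h1 : e.toBasis.toMatrix f = Matrix.of fun i j => f j i := by
    ext i j
    simp [Basis.toMatrix_apply, he, EuclideanSpace.basisFun_repr]
  have h2 : e.toBasis.det f = (e.toBasis.det b.toBasis) * (b.toBasis.det f) := by
    rw [Basis.det_apply, Basis.det_apply, Basis.det_apply,
      ← Basis.toMatrix_mul_toMatrix e.toBasis b.toBasis f, Matrix.det_mul]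
  have h3 : ‖e.toBasis.det b.toBasis‖ = 1 := e.det_to_matrix_orthonormalBasis b
  have h4 : b.toBasis.det f = ∏ i, inner ℂ (b i) (f i) :=
    InnerProductSpace.gramSchmidtOrthonormalBasis_det hcard f
  calc ‖(Matrix.of fun i j => f j i).det‖ = ‖e.toBasis.det f‖ := by
        rw [Basis.det_apply, h1]
      _ = ‖b.toBasis.det f‖ := by rw [h2, norm_mul, h3, one_mul]
      _ ≤ ∏ i, ‖f i‖ := by
        rw [h4, norm_prod]
        refine Finset.prod_le_prod (fun i _ => norm_nonneg _) fun i _ => ?_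
        calc ‖(inner ℂ (b i) (f i) : ℂ)‖ ≤ ‖b i‖ * ‖f i‖ := norm_inner_le_norm _ _
          _ = ‖f i‖ := by rw [b.orthonormal.1 i, one_mul]

lemma eval_charpoly'' {m : ℕ} (A : Matrix (Fin m) (Fin m) ℂ) (μ : ℂ) :
    A.charpoly.eval μ = (μ • (1 : Matrix (Fin m) (Fin m) ℂ) - A).det := by
  rw [Matrix.charpoly, _root_.eval_det, matPolyEquiv_charmatrix]
  congr 1
  rw [eval_sub, eval_X, eval_C]
  congr 1
  rw [Matrix.scalar_apply, smul_eq_diagonal_mul]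
  simp

lemma root_bound {n : ℕ} {H : ℝ} {M : Matrix (Fin n) (Fin n) ℤ}
    (hM : ∀ i j, |(M i j : ℝ)| ≤ H) {μ : ℂ}
    (hroot : ((Matrix.charpoly M).map (Int.castRingHom ℂ)).eval μ = 0) :
    ‖μ‖ ≤ n * H := by
  set A : Matrix (Fin n) (Fin n) ℂ := M.map (Int.castRingHom ℂ) with hA
  have hch : A.charpoly = (Matrix.charpoly M).map (Int.castRingHom ℂ) :=
    Matrix.charpoly_map M (Int.castRingHom ℂ)
  have hdet : (μ • (1 : Matrix (Fin n) (Fin n) ℂ) - A).det = 0 := by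
    rw [← eval_charpoly'', hch, hroot]
  obtain ⟨v, hv, hv0⟩ := (Matrix.exists_mulVec_eq_zero_iff).mpr hdet
  have heig : Module.End.HasEigenvalue (Matrix.toLin' A) μ := by
    refine Module.End.hasEigenvalue_of_hasEigenvector ⟨?_, hv⟩
    rw [Module.End.mem_eigenspace_iff, Matrix.toLin'_apply]
    have := hv0
    rw [Matrix.sub_mulVec, Matrix.smul_mulVec, Matrix.one_mulVec, sub_eq_zero] at this
    exact this.symm
  obtain ⟨k, hk⟩ := eigenvalue_mem_ball heig
  rw [Metric.mem_closedBall, Complex.dist_eq] at hk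
  have h1 : ‖μ‖ ≤ ‖A k k‖ + ∑ j ∈ Finset.univ.erase k, ‖A k j‖ := by
    calc ‖μ‖ ≤ ‖μ - A k k‖ + ‖A k k‖ := by
          simpa using norm_add_le (μ - A k k) (A k k)
      _ ≤ _ := by rw [add_comm (‖A k k‖)]; exact add_le_add_left hk _
  have h2 : ‖A k k‖ + ∑ j ∈ Finset.univ.erase k, ‖A k j‖ = ∑ j, ‖A k j‖ := by
    rw [Finset.add_sum_erase _ (fun j => ‖A k j‖) (Finset.mem_univ k)]
  have h3 : ∀ j, ‖A k j‖ ≤ H := by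
    intro j
    have : ‖A k j‖ = |(M k j : ℝ)| := by
      simp [hA, Matrix.map_apply]
    rw [this]; exact hM k j
  calc ‖μ‖ ≤ ∑ j, ‖A k j‖ := h2 ▸ h1
    _ ≤ ∑ _j : Fin n, H := Finset.sum_le_sum fun j _ => h3 j
    _ = n * H := by simp [Finset.sum_const, nsmul_eq_mul]



theorem stmt7 (n : ℕ) (H : ℝ) (hH : 1 ≤ H)
    (M : Matrix (Fin n) (Fin n) ℤ) (hM : ∀ i j, |(M i j : ℝ)| ≤ H)
    (d : ℕ) (lam : Fin d → ℂ)
    (hdvd : (∏ i : Fin d, (Polynomial.X - Polynomial.C (lam i))) ∣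
      (Matrix.charpoly M).map (Int.castRingHom ℂ)) :
    ‖∏ i : Fin d, ∏ j ∈ Finset.Ioi i, (lam i - lam j) ^ 2‖ ≤
      H ^ (n * (n - 1)) * (n : ℝ) ^ (n ^ 2) := by
  have hRHS1 : (1 : ℝ) ≤ H ^ (n * (n - 1)) * (n : ℝ) ^ (n ^ 2) := by
    rcases Nat.eq_zero_or_pos n with rfl | hn
    · norm_num
    · have h1 : (1 : ℝ) ≤ H ^ (n * (n - 1)) := one_le_pow₀ hH
      have h2 : (1 : ℝ) ≤ (n : ℝ) ^ (n ^ 2) :=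
        one_le_pow₀ (by exact_mod_cast hn)
      nlinarith
  rcases Nat.eq_zero_or_pos d with rfl | hd
  · simpa using hRHS1
  -- now d ≥ 1
  set B : ℝ := n * H with hB
  have hφm : ((Matrix.charpoly M).map (Int.castRingHom ℂ)).Monic :=
    (Matrix.charpoly_monic M).map _
  have hφdeg : ((Matrix.charpoly M).map (Int.castRingHom ℂ)).natDegree = n := by
    rw [(Matrix.charpoly_monic M).natDegree_map, Matrix.charpoly_natDegree_eq_dim,
      Fintype.card_fin]
  have hψdeg : (∏ i : Fin d, (X - C (lam i))).natDegree = d := by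
    rw [Polynomial.natDegree_prod _ _ (fun i _ => X_sub_C_ne_zero (lam i))]
    simp
  have hdn : d ≤ n := by
    rw [← hφdeg, ← hψdeg]
    exact Polynomial.natDegree_le_of_dvd hdvd hφm.ne_zero
  have hn : 1 ≤ n := le_trans hd hdn
  have hB1 : 1 ≤ B := by
    rw [hB]
    calc (1:ℝ) = 1 * 1 := by ring
      _ ≤ n * H := by
        apply mul_le_mul (by exact_mod_cast hn) hH zero_le_one (by positivity)
  have hroot : ∀ i, ‖lam i‖ ≤ B := by
    intro i
    apply root_bound hM
    have h1 : (X - C (lam i)) ∣ (Matrix.charpoly M).map (Int.castRingHom ℂ) :=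
      dvd_trans (Finset.dvd_prod_of_mem (fun i => X - C (lam i)) (Finset.mem_univ i)) hdvd
    obtain ⟨q, hq⟩ := h1
    rw [hq]
    simp
  -- Hadamard
  set f : Fin d → EuclideanSpace ℂ (Fin d) :=
    fun j => (WithLp.equiv 2 (Fin d → ℂ)).symm (fun i => lam i ^ (j : ℕ)) with hf
  have hVdm : Matrix.vandermonde lam = Matrix.of fun i j => f j i := by
    ext i j
    simp [Matrix.vandermonde, hf]
  have hdet : ‖(Matrix.vandermonde lam).det‖ ≤ ∏ j, ‖f j‖ := by
    rw [hVdm]; exact hadamard_col d f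
  have hLHS : ‖∏ i : Fin d, ∏ j ∈ Finset.Ioi i, (lam i - lam j) ^ 2‖ =
      ‖(Matrix.vandermonde lam).det‖ ^ 2 := by
    rw [Matrix.det_vandermonde, ← norm_pow, ← Finset.prod_pow]
    congr 1
    refine Finset.prod_congr rfl fun i _ => ?_
    rw [← Finset.prod_pow]
    refine Finset.prod_congr rfl fun j _ => ?_
    rw [← neg_sub (lam i) (lam j), neg_sq]
  have hnorm : ∀ j : Fin d, ‖f j‖ ^ 2 ≤ (d : ℝ) * (B ^ (j : ℕ)) ^ 2 := by
    intro j
    rw [EuclideanSpace.norm_eq, Real.sq_sqrt (Finset.sum_nonneg fun i _ => sq_nonneg _)]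
    calc ∑ i, ‖f j i‖ ^ 2 ≤ ∑ _i : Fin d, (B ^ (j : ℕ)) ^ 2 := by
          refine Finset.sum_le_sum fun i _ => ?_
          have h1 : ‖f j i‖ = ‖lam i‖ ^ (j : ℕ) := by
            simp [hf]
          rw [h1]
          have h2 : ‖lam i‖ ^ (j : ℕ) ≤ B ^ (j : ℕ) :=
            pow_le_pow_left₀ (norm_nonneg _) (hroot i) _
          exact pow_le_pow_left₀ (by positivity) h2 2
      _ = (d : ℝ) * (B ^ (j : ℕ)) ^ 2 := by
          simp [Finset.sum_const, nsmul_eq_mul]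
  have key : ‖(Matrix.vandermonde lam).det‖ ^ 2 ≤ (d : ℝ) ^ d * B ^ (d * (d - 1)) := by
    calc ‖(Matrix.vandermonde lam).det‖ ^ 2 ≤ (∏ j, ‖f j‖) ^ 2 :=
          pow_le_pow_left₀ (norm_nonneg _) hdet 2
      _ = ∏ j, ‖f j‖ ^ 2 := by rw [← Finset.prod_pow]
      _ ≤ ∏ j : Fin d, ((d : ℝ) * (B ^ (j : ℕ)) ^ 2) :=
          Finset.prod_le_prod (fun _ _ => sq_nonneg _) (fun j _ => hnorm j)
      _ = (d : ℝ) ^ d * B ^ (d * (d - 1)) := by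
          rw [Finset.prod_mul_distrib, Finset.prod_const, Finset.card_univ, Fintype.card_fin]
          congr 1
          simp_rw [← pow_mul]
          rw [Finset.prod_pow_eq_pow_sum]
          congr 1
          rw [← Finset.sum_mul, Fin.sum_univ_eq_sum_range (fun i => i)]
          rw [Finset.sum_range_id_mul_two]
  have final : (d : ℝ) ^ d * B ^ (d * (d - 1)) ≤ H ^ (n * (n - 1)) * (n : ℝ) ^ (n ^ 2) := by
    have s1 : (d : ℝ) ^ d ≤ (n : ℝ) ^ n := by
      calc (d : ℝ) ^ d ≤ (n : ℝ) ^ d := pow_le_pow_left₀ (by positivity) (by exact_mod_cast hdn) d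
        _ ≤ (n : ℝ) ^ n := pow_le_pow_right₀ (by exact_mod_cast hn) hdn
    have s2 : B ^ (d * (d - 1)) ≤ B ^ (n * (n - 1)) :=
      pow_le_pow_right₀ hB1 (Nat.mul_le_mul hdn (by omega))
    have s3 : B ^ (n * (n - 1)) = (n : ℝ) ^ (n * (n - 1)) * H ^ (n * (n - 1)) := by
      rw [hB, mul_pow]
    have s4 : (n : ℝ) ^ n * (n : ℝ) ^ (n * (n - 1)) = (n : ℝ) ^ (n ^ 2) := by
      rw [← pow_add]
      congr 1
      cases n with
      | zero => rfl
      | succ m => simp [Nat.succ_sub_one]; ring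
    calc (d : ℝ) ^ d * B ^ (d * (d - 1)) ≤ (n : ℝ) ^ n * B ^ (n * (n - 1)) := by
          apply mul_le_mul s1 s2 (by positivity) (by positivity)
      _ = (n : ℝ) ^ (n ^ 2) * H ^ (n * (n - 1)) := by rw [s3, ← mul_assoc, s4]
      _ = H ^ (n * (n - 1)) * (n : ℝ) ^ (n ^ 2) := by ring
  rw [hLHS]
  exact le_trans key final
end
end

section
/- Let q be a prime power, α ∈ (0,1), and let X be a random vector in F_q^n whose coordinates are independent, each with an α-balanced distribution. Then for every nonempty affine subspace V ⊆ F_q^n (a coset of a linear subspace of dimension dim V), P(X ∈ V) ≤ (1−α)^{n − dim V}. -/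
/- STATEMENT 12 (Odlyzko's lemma): If X is a random vector in F_q^n with independent
α-balanced coordinates, and V = x + W is a nonempty affine subspace of F_q^n, then
P(X ∈ V) ≤ (1 − α)^{n − dim V}. -/

open scoped Classical

noncomputable section

/-- `μ` is an `α`-balanced probability measure on the finite additive group `F`. -/
def IsBalanced {F : Type*} [AddCommGroup F] [Fintype F] (α : ℝ) (μ : F → ℝ) : Prop :=
  (∀ x, 0 ≤ μ x) ∧ (∑ x, μ x = 1) ∧
    ∀ (x : F) (H : AddSubgroup F), H ≠ ⊤ →
      ∑ y ∈ Finset.univ.filter (fun y => y - x ∈ H), μ y ≤ 1 - α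

/-- The probability that a random vector with independent coordinates of laws `μ j`
lies in the set `S`. -/
def vecProb {F : Type*} [Fintype F] {n : ℕ} (μ : Fin n → F → ℝ)
    (S : Set (Fin n → F)) : ℝ :=
  ∑ y ∈ Finset.univ.filter (fun y : Fin n → F => y ∈ S), ∏ j, μ j (y j)

/-- Singleton bound: an α-balanced measure gives mass at most 1-α to each point. -/
lemma IsBalanced.singleton_le {F : Type*} [Field F] [Fintype F] {α : ℝ} {μ : F → ℝ}
    (h : IsBalanced α μ) (c : F) : μ c ≤ 1 - α := by
  have hbot : (⊥ : AddSubgroup F) ≠ ⊤ := by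
    intro h'
    have h1 : (1 : F) ∈ (⊥ : AddSubgroup F) := h' ▸ AddSubgroup.mem_top 1
    exact one_ne_zero (AddSubgroup.mem_bot.mp h1)
  have key := h.2.2 c ⊥ hbot
  have hfil : Finset.univ.filter (fun y : F => y - c ∈ (⊥ : AddSubgroup F)) = {c} := by
    ext y; simp [sub_eq_zero]
  rwa [hfil, Finset.sum_singleton] at key

/-- A subspace of `F^n` of rank `d` injects into some `d` coordinates. -/
lemma exists_coords {F : Type*} [Field F] {n : ℕ} (W : Submodule F (Fin n → F)) :
    ∃ S : Finset (Fin n), S.card ≤ Module.finrank F W ∧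
      ∀ w ∈ W, (∀ j ∈ S, w j = 0) → w = 0 := by
  suffices h : ∀ (d : ℕ) (W : Submodule F (Fin n → F)), Module.finrank F W = d →
      ∃ S : Finset (Fin n), S.card ≤ Module.finrank F W ∧
        ∀ w ∈ W, (∀ j ∈ S, w j = 0) → w = 0 from h _ W rfl
  intro d
  induction d using Nat.strong_induction_on with
  | _ d ih =>
    intro W hd
    by_cases hW : W = ⊥
    · exact ⟨∅, by simp, fun w hw _ => by simpa [hW] using hw⟩
    · obtain ⟨w0, hw0W, hw0⟩ := Submodule.exists_mem_ne_zero_of_ne_bot hW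
      obtain ⟨j, hj⟩ : ∃ j, w0 j ≠ 0 := by
        by_contra h; push_neg at h; exact hw0 (funext h)
      set W' := W ⊓ LinearMap.ker (LinearMap.proj j : (Fin n → F) →ₗ[F] F) with hW'
      have hlt : W' < W := lt_of_le_of_ne inf_le_left (by
        intro h
        have : w0 ∈ W' := h ▸ hw0W
        exact hj this.2)
      have hrlt : Module.finrank F W' < Module.finrank F W :=
        Submodule.finrank_lt_finrank_of_lt hlt
      set f : W →ₗ[F] F := (LinearMap.proj j).comp W.subtype with hf
      have hmap : Submodule.map W.subtype (LinearMap.ker f) = W' := by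
        ext w
        simp [hf, hW', LinearMap.mem_ker]
        tauto
      have hker : Module.finrank F (LinearMap.ker f) = Module.finrank F W' := by
        rw [← hmap]; exact (Submodule.finrank_map_subtype_eq W _).symm
      have hle : Module.finrank F W ≤ Module.finrank F W' + 1 := by
        have h1 := LinearMap.finrank_range_add_finrank_ker f
        have h2 : Module.finrank F (LinearMap.range f) ≤ 1 := by
          have := Submodule.finrank_le (LinearMap.range f)
          simpa using this
        omega
      obtain ⟨S', hS'c, hS'⟩ := ih (Module.finrank F W') (by omega) W' rfl
      refine ⟨insert j S', ?_, ?_⟩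
      · calc (insert j S').card ≤ S'.card + 1 := Finset.card_insert_le _ _
          _ ≤ Module.finrank F W' + 1 := by omega
          _ ≤ Module.finrank F W := by omega
      · intro w hw h0
        have hwj : w j = 0 := h0 j (Finset.mem_insert_self _ _)
        have hw' : w ∈ W' := ⟨hw, hwj⟩
        exact hS' w hw' fun i hi => h0 i (Finset.mem_insert_of_mem hi)

theorem stmt12 (F : Type) [Field F] [Fintype F] (α : ℝ) (hα0 : 0 < α) (hα1 : α < 1)
    (n : ℕ) (μ : Fin n → F → ℝ) (hbal : ∀ j, IsBalanced α (μ j))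
    (W : Submodule F (Fin n → F)) (x : Fin n → F) :
    vecProb μ {y | y - x ∈ W} ≤ (1 - α) ^ (n - Module.finrank F W) := by
  obtain ⟨S, hScard, hS⟩ := exists_coords W
  set d := Module.finrank F W with hdrw
  set T := Finset.univ.filter (fun y : Fin n → F => y ∈ {y | y - x ∈ W}) with hT
  have hμ0 : ∀ j c, 0 ≤ μ j c := fun j => (hbal j).1
  have hμ1 : ∀ j c, μ j c ≤ 1 - α := fun j c => (hbal j).singleton_le c
  have h1α0 : (0:ℝ) ≤ 1 - α := by linarith
  have h1α1 : (1:ℝ) - α ≤ 1 := by linarith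
  -- per-term bound
  have hterm : ∀ y : Fin n → F,
      ∏ j, μ j (y j) ≤ (1-α)^(n-d) * ∏ j ∈ S, μ j (y j) := by
    intro y
    have hsplit : ∏ j, μ j (y j) = (∏ j ∈ S, μ j (y j)) * ∏ j ∈ Sᶜ, μ j (y j) :=
      (Finset.prod_mul_prod_compl S _).symm
    rw [hsplit, mul_comm]
    refine mul_le_mul ?_ le_rfl (Finset.prod_nonneg fun j _ => hμ0 j _) (by positivity)
    calc ∏ j ∈ Sᶜ, μ j (y j) ≤ ∏ j ∈ Sᶜ, (1-α) :=
          Finset.prod_le_prod (fun j _ => hμ0 j _) (fun j _ => hμ1 j _)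
      _ = (1-α)^(Sᶜ.card) := by rw [Finset.prod_const]
      _ ≤ (1-α)^(n-d) := by
          apply pow_le_pow_of_le_one h1α0 h1α1
          have hcc : Sᶜ.card = n - S.card := by simp [Finset.card_compl]
          omega
  -- sum over the coset of the S-product is at most 1
  have hsum : ∑ y ∈ T, ∏ j ∈ S, μ j (y j) ≤ 1 := by
    set g : (Fin n → F) → (Fin n → F) := fun y j => if j ∈ S then y j else 0 with hg
    have hmemT : ∀ y, y ∈ T → y - x ∈ W := by
      intro y hy; simpa [hT] using hy
    have hinj : ∀ y₁ ∈ T, ∀ y₂ ∈ T, g y₁ = g y₂ → y₁ = y₂ := by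
      intro y₁ h₁ y₂ h₂ hgeq
      have hmem : y₁ - y₂ ∈ W := by
        have := W.sub_mem (hmemT y₁ h₁) (hmemT y₂ h₂)
        simpa using this
      have hzero : y₁ - y₂ = 0 := by
        refine hS (y₁ - y₂) hmem fun j hj => ?_
        have := congrFun hgeq j
        simp only [hg, if_pos hj] at this
        simp [Pi.sub_apply, this]
      exact sub_eq_zero.mp hzero
    have hprodeq : ∀ y, ∏ j ∈ S, μ j ((g y) j) = ∏ j ∈ S, μ j (y j) := fun y =>
      Finset.prod_congr rfl fun j hj => by simp [hg, hj]
    set A : Fin n → Finset F := fun j => if j ∈ S then (Finset.univ : Finset F) else {0} with hA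
    have hsub : T.image g ⊆ Fintype.piFinset A := by
      intro z hz
      obtain ⟨y, _, rfl⟩ := Finset.mem_image.mp hz
      rw [Fintype.mem_piFinset]
      intro j
      by_cases hj : j ∈ S <;> simp [hA, hg, hj]
    calc ∑ y ∈ T, ∏ j ∈ S, μ j (y j)
        = ∑ z ∈ T.image g, ∏ j ∈ S, μ j (z j) := by
          rw [Finset.sum_image hinj]
          exact Finset.sum_congr rfl fun y _ => (hprodeq y).symm
      _ ≤ ∑ z ∈ Fintype.piFinset A, ∏ j ∈ S, μ j (z j) :=
          Finset.sum_le_sum_of_subset_of_nonneg hsub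
            (fun z _ _ => Finset.prod_nonneg fun j _ => hμ0 j _)
      _ = ∑ z ∈ Fintype.piFinset A, ∏ j, (if j ∈ S then μ j (z j) else 1) := by
          refine Finset.sum_congr rfl fun z _ => ?_
          rw [← Finset.prod_mul_prod_compl S]
          have h1 : ∏ j ∈ S, (if j ∈ S then μ j (z j) else 1) = ∏ j ∈ S, μ j (z j) :=
            Finset.prod_congr rfl fun j hj => by simp [hj]
          have h2 : ∏ j ∈ Sᶜ, (if j ∈ S then μ j (z j) else 1) = 1 :=
            Finset.prod_eq_one fun j hj => by simp [Finset.mem_compl.mp hj]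
          rw [h1, h2, mul_one]
      _ = ∏ j, ∑ c ∈ A j, (if j ∈ S then μ j c else 1) := (Finset.prod_univ_sum A (fun j c => if j ∈ S then μ j c else 1)).symm
      _ = 1 := by
          refine Finset.prod_eq_one fun j _ => ?_
          by_cases hj : j ∈ S
          · simp only [hA, if_pos hj]
            simpa using (hbal j).2.1
          · simp [hA, hj]
  -- put it together
  have hrw : vecProb μ {y | y - x ∈ W} = ∑ y ∈ T, ∏ j, μ j (y j) := rfl
  calc vecProb μ {y | y - x ∈ W} = ∑ y ∈ T, ∏ j, μ j (y j) := hrw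
    _ ≤ ∑ y ∈ T, (1-α)^(n-d) * ∏ j ∈ S, μ j (y j) :=
        Finset.sum_le_sum fun y _ => hterm y
    _ = (1-α)^(n-d) * ∑ y ∈ T, ∏ j ∈ S, μ j (y j) := by rw [Finset.mul_sum]
    _ ≤ (1-α)^(n-d) * 1 := by
        apply mul_le_mul_of_nonneg_left hsum (by positivity)
    _ = (1-α)^(n-d) := mul_one _
end
end

section
/- Let q be a prime power, α ∈ (0,1), and let μ be an α-balanced probability measure on F_q. Then there exists a probability measure ν on F_q such that: (1) ν is (α/8)-balanced; (2) ν̂(u) is a strictly positive real number for every u ∈ F_q; (3) ν̂(u)^4 ≥ |μ̂(u)| for every u ∈ F_q; and (4) ν̂(s+t)² ≥ |μ̂(s)|·|μ̂(t)| for all s, t ∈ F_q. -/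
/- STATEMENT 15: For every α-balanced probability measure μ on F_q there is a
probability measure ν on F_q such that (1) ν is (α/8)-balanced; (2) ν̂ is strictly
positive real; (3) ν̂(u)⁴ ≥ |μ̂(u)| for all u; (4) ν̂(s+t)² ≥ |μ̂(s)||μ̂(t)| for all s, t. -/

open scoped Classical

noncomputable section

/-- The Fourier transform `μ̂(u) = ∑_x μ(x) χ(−ux)` of a measure on a finite field,
with respect to the additive character `χ`. -/
def fourierT {F : Type*} [Field F] [Fintype F] (χ : AddChar F ℂ) (μ : F → ℝ) (u : F) : ℂ :=
  ∑ x, (μ x : ℂ) * χ (-(u * x))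

section Aux
variable {F : Type} [Field F] [Fintype F] (χ : AddChar F ℂ) (μ : F → ℝ)

lemma conj_fourierT (u : F) :
    (starRingEnd ℂ) (fourierT χ μ u) = ∑ y, (μ y : ℂ) * χ (u * y) := by
  rw [fourierT, map_sum]
  refine Finset.sum_congr rfl fun y _ => ?_
  rw [map_mul, Complex.conj_ofReal, ← AddChar.map_neg_eq_conj, neg_neg]

lemma fourierT_conv (u : F) :
    fourierT χ (fun x => ∑ y, μ (x + y) * μ y) u = (Complex.normSq (fourierT χ μ u) : ℂ) := by
  have h1 : fourierT χ (fun x => ∑ y, μ (x + y) * μ y) u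
      = ∑ y, (μ y : ℂ) * ∑ x, (μ (x + y) : ℂ) * χ (-(u * x)) := by
    rw [fourierT]
    push_cast
    simp_rw [Finset.sum_mul]
    rw [Finset.sum_comm]
    refine Finset.sum_congr rfl fun y _ => ?_
    rw [Finset.mul_sum]
    exact Finset.sum_congr rfl fun x _ => by ring
  have h2 : ∀ y : F, ∑ x, (μ (x + y) : ℂ) * χ (-(u * x))
      = χ (u * y) * fourierT χ μ u := by
    intro y
    have := Fintype.sum_equiv (Equiv.subRight y)
      (fun z => (μ z : ℂ) * χ (-(u * (z - y))))
      (fun x => (μ (x + y) : ℂ) * χ (-(u * x)))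
      (fun z => by simp [Equiv.subRight])
    rw [← this, fourierT, Finset.mul_sum]
    refine Finset.sum_congr rfl fun z _ => ?_
    show (μ z : ℂ) * χ (-(u * (z - y))) = _
    have h : -(u * (z - y)) = u * y + -(u * z) := by ring
    rw [h, AddChar.map_add_eq_mul]
    ring
  simp_rw [h1, h2]
  have : ∑ y, (μ y : ℂ) * (χ (u * y) * fourierT χ μ u)
      = (∑ y, (μ y : ℂ) * χ (u * y)) * fourierT χ μ u := by
    rw [Finset.sum_mul]; exact Finset.sum_congr rfl fun y _ => by ring
  rw [this, ← conj_fourierT, mul_comm, Complex.mul_conj]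

lemma normSq_fourierT_eq (u : F) :
    Complex.normSq (fourierT χ μ u) = ∑ x, ∑ y, μ x * μ y * (χ (u * (y - x))).re := by
  have h : (Complex.normSq (fourierT χ μ u) : ℂ)
      = ∑ x, ∑ y, (μ x : ℂ) * μ y * χ (u * (y - x)) := by
    rw [← Complex.mul_conj, conj_fourierT, fourierT, Finset.sum_mul_sum]
    refine Finset.sum_congr rfl fun x _ => Finset.sum_congr rfl fun y _ => ?_
    have : u * (y - x) = -(u * x) + u * y := by ring
    rw [this, AddChar.map_add_eq_mul]
    ring
  have := congrArg Complex.re h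
  simpa [Complex.ofReal_re, Complex.mul_re, Complex.ofReal_im] using this

lemma re_mul_ge {z w : ℂ} (hz : Complex.normSq z = 1) (hw : Complex.normSq w = 1) :
    2 * z.re + 2 * w.re - 3 ≤ (z * w).re := by
  have hz' : z.re ^ 2 + z.im ^ 2 = 1 := by
    simpa [Complex.normSq_apply, sq] using hz
  have hw' : w.re ^ 2 + w.im ^ 2 = 1 := by
    simpa [Complex.normSq_apply, sq] using hw
  rw [Complex.mul_re]
  nlinarith [sq_nonneg (z.im + w.im), sq_nonneg (z.im - w.im), sq_nonneg (z.re + w.re - 2)]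

lemma normSq_char (v : F) : Complex.normSq (χ v) = 1 := by
  have h := χ.norm_apply v
  rw [Complex.normSq_eq_norm_sq, h, one_pow]

lemma key4 (hpos : ∀ x, 0 ≤ μ x) (hsum : ∑ x, μ x = 1) (s t : F) :
    2 * Complex.normSq (fourierT χ μ s) + 2 * Complex.normSq (fourierT χ μ t) - 3
      ≤ Complex.normSq (fourierT χ μ (s + t)) := by
  have hw : ∑ x, ∑ y, μ x * μ y = 1 := by
    rw [← Finset.sum_mul_sum, hsum, one_mul]
  have hstep : ∀ x y : F, μ x * μ y *
      (2 * (χ (s * (y - x))).re + 2 * (χ (t * (y - x))).re - 3)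
      ≤ μ x * μ y * (χ ((s + t) * (y - x))).re := by
    intro x y
    have hsplit : ((s + t) * (y - x)) = s * (y - x) + t * (y - x) := by ring
    rw [hsplit, AddChar.map_add_eq_mul]
    exact mul_le_mul_of_nonneg_left
      (re_mul_ge (normSq_char χ _) (normSq_char χ _))
      (mul_nonneg (hpos x) (hpos y))
  have hle : ∑ x, ∑ y, μ x * μ y *
      (2 * (χ (s * (y - x))).re + 2 * (χ (t * (y - x))).re - 3)
      ≤ ∑ x, ∑ y, μ x * μ y * (χ ((s + t) * (y - x))).re :=
    Finset.sum_le_sum fun x _ => Finset.sum_le_sum fun y _ => hstep x y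
  have hexp : ∑ x, ∑ y, μ x * μ y *
      (2 * (χ (s * (y - x))).re + 2 * (χ (t * (y - x))).re - 3)
      = 2 * (∑ x, ∑ y, μ x * μ y * (χ (s * (y - x))).re)
        + 2 * (∑ x, ∑ y, μ x * μ y * (χ (t * (y - x))).re)
        - 3 * (∑ x, ∑ y, μ x * μ y) := by
    simp_rw [Finset.mul_sum, ← Finset.sum_add_distrib, ← Finset.sum_sub_distrib]
    exact Finset.sum_congr rfl fun x _ => Finset.sum_congr rfl fun y _ => by ring
  rw [normSq_fourierT_eq, normSq_fourierT_eq, normSq_fourierT_eq]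
  calc 2 * (∑ x, ∑ y, μ x * μ y * (χ (s * (y - x))).re)
        + 2 * (∑ x, ∑ y, μ x * μ y * (χ (t * (y - x))).re) - 3
      = ∑ x, ∑ y, μ x * μ y *
          (2 * (χ (s * (y - x))).re + 2 * (χ (t * (y - x))).re - 3) := by
        rw [hexp, hw]; ring
    _ ≤ _ := hle

lemma abs_fourierT_le_one (hpos : ∀ x, 0 ≤ μ x) (hsum : ∑ x, μ x = 1) (u : F) :
    ‖fourierT χ μ u‖ ≤ 1 := by
  rw [fourierT]
  refine le_trans (norm_sum_le _ _) ?_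
  have : ∀ x : F, ‖(μ x : ℂ) * χ (-(u * x))‖ = μ x := by
    intro x
    rw [norm_mul, Complex.norm_real, Real.norm_of_nonneg (hpos x)]
    have : ‖χ (-(u * x))‖ = 1 := χ.norm_apply _
    rw [this, mul_one]
  simp_rw [this]
  exact le_of_eq hsum

end Aux

theorem stmt15 (F : Type) [Field F] [Fintype F] (χ : AddChar F ℂ) (hχ : χ ≠ 1)
    (α : ℝ) (hα0 : 0 < α) (hα1 : α < 1)
    (μ : F → ℝ) (hμ : IsBalanced α μ) :
    ∃ ν : F → ℝ,
      IsBalanced (α / 8) ν ∧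
      (∀ u : F, ∃ r : ℝ, 0 < r ∧ fourierT χ ν u = (r : ℂ)) ∧
      (∀ u : F, ‖fourierT χ μ u‖ ≤ ((fourierT χ ν u).re) ^ 4) ∧
      (∀ s t : F, ‖fourierT χ μ s‖ * ‖fourierT χ μ t‖ ≤
        ((fourierT χ ν (s + t)).re) ^ 2) := by
  obtain ⟨hpos, hsum, hbal⟩ := hμ
  set ν : F → ℝ := fun x => (7 * (if x = 0 then 1 else 0) + ∑ y, μ (x + y) * μ y) / 8 with hν
  -- Fourier transform of ν
  have hFν : ∀ u : F, fourierT χ ν u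
      = (((7 + Complex.normSq (fourierT χ μ u)) / 8 : ℝ) : ℂ) := by
    intro u
    have hδ : ∑ x : F, (((if x = 0 then (1:ℝ) else 0) : ℝ) : ℂ) * χ (-(u * x)) = 1 := by
      simp [apply_ite (fun r : ℝ => (r : ℂ)), ite_mul]
    have := fourierT_conv χ μ u
    rw [fourierT] at this ⊢
    calc ∑ x, ((ν x : ℝ) : ℂ) * χ (-(u * x))
        = (7 * ∑ x : F, (((if x = 0 then (1:ℝ) else 0) : ℝ) : ℂ) * χ (-(u * x))
            + ∑ x : F, ((∑ y, μ (x + y) * μ y : ℝ) : ℂ) * χ (-(u * x))) / 8 := by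
          rw [Finset.mul_sum, ← Finset.sum_add_distrib, Finset.sum_div]
          refine Finset.sum_congr rfl fun x _ => ?_
          push_cast [hν]
          ring
      _ = (7 * 1 + (Complex.normSq (fourierT χ μ u) : ℂ)) / 8 := by rw [hδ, this]
      _ = _ := by push_cast; ring
  have hFνre : ∀ u : F, (fourierT χ ν u).re
      = (7 + Complex.normSq (fourierT χ μ u)) / 8 := by
    intro u; rw [hFν u, Complex.ofReal_re]
  refine ⟨ν, ?_, ?_, ?_, ?_⟩
  · -- balanced
    refine ⟨?_, ?_, ?_⟩
    · intro x
      have h1 : (0:ℝ) ≤ ∑ y, μ (x + y) * μ y :=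
        Finset.sum_nonneg fun y _ => mul_nonneg (hpos _) (hpos _)
      have h2 : (0:ℝ) ≤ (if x = 0 then (1:ℝ) else 0) := by positivity
      simp only [hν]
      positivity
    · have hδ : ∑ x : F, (if x = 0 then (1:ℝ) else 0) = 1 := by simp
      have hconv : ∑ x : F, ∑ y, μ (x + y) * μ y = 1 := by
        rw [Finset.sum_comm]
        have : ∀ y : F, ∑ x : F, μ (x + y) * μ y = μ y := by
          intro y
          have he := Fintype.sum_equiv (Equiv.subRight y)
            (fun z => μ z * μ y) (fun x => μ (x + y) * μ y)
            (fun z => by simp [Equiv.subRight])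
          rw [← he, ← Finset.sum_mul, hsum, one_mul]
        simp_rw [this]
        exact hsum
      simp only [hν]
      rw [← Finset.sum_div, Finset.sum_add_distrib, ← Finset.mul_sum, hδ, hconv]
      norm_num
    · intro x H hH
      set P := Finset.univ.filter (fun y => y - x ∈ H) with hP
      have hδ : ∑ y ∈ P, (if y = 0 then (1:ℝ) else 0) ≤ 1 := by
        have : ∑ y ∈ P, (if y = 0 then (1:ℝ) else 0)
            ≤ ∑ y : F, (if y = 0 then (1:ℝ) else 0) := by
          refine Finset.sum_le_sum_of_subset_of_nonneg (Finset.subset_univ P) ?_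
          intro i _ _; positivity
        simpa using this
      have hconv : ∑ y ∈ P, ∑ z, μ (y + z) * μ z ≤ 1 - α := by
        rw [Finset.sum_comm]
        have hinner : ∀ z : F, ∑ y ∈ P, μ (y + z) * μ z ≤ (1 - α) * μ z := by
          intro z
          have hbij : ∑ y ∈ P, μ (y + z)
              = ∑ w ∈ Finset.univ.filter (fun w => w - (x + z) ∈ H), μ w := by
            refine Finset.sum_nbij' (fun y => y + z) (fun w => w - z) ?_ ?_ ?_ ?_ ?_
            · intro y hy
              simp only [hP, Finset.mem_filter, Finset.mem_univ, true_and] at hy ⊢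
              have : y + z - (x + z) = y - x := by ring
              rw [this]; exact hy
            · intro w hw
              simp only [hP, Finset.mem_filter, Finset.mem_univ, true_and] at hw ⊢
              have : w - z - x = w - (x + z) := by ring
              rw [this]; exact hw
            · intro y _; ring
            · intro w _; ring
            · intro y _; rfl
          rw [← Finset.sum_mul, hbij]
          exact mul_le_mul_of_nonneg_right (hbal (x + z) H hH) (hpos z)
        calc ∑ z, ∑ y ∈ P, μ (y + z) * μ z ≤ ∑ z, (1 - α) * μ z :=
              Finset.sum_le_sum fun z _ => hinner z
          _ = 1 - α := by rw [← Finset.mul_sum, hsum, mul_one]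
      have : ∑ y ∈ P, ν y
          = (7 * ∑ y ∈ P, (if y = 0 then (1:ℝ) else 0) + ∑ y ∈ P, ∑ z, μ (y + z) * μ z) / 8 := by
        simp only [hν]
        rw [Finset.mul_sum, ← Finset.sum_add_distrib, ← Finset.sum_div]
      rw [this]
      linarith
  · -- positive real Fourier transform
    intro u
    refine ⟨(7 + Complex.normSq (fourierT χ μ u)) / 8, ?_, hFν u⟩
    have := Complex.normSq_nonneg (fourierT χ μ u)
    linarith
  · -- fourth power bound
    intro u
    set m := ‖fourierT χ μ u‖ with hm
    have hm0 : 0 ≤ m := norm_nonneg _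
    have hm1 : m ≤ 1 := abs_fourierT_le_one χ μ hpos hsum u
    have hnsq : Complex.normSq (fourierT χ μ u) = m ^ 2 := by
      rw [hm, ← Complex.sq_norm]
    rw [hFνre u, hnsq]
    have hq : (0:ℝ) ≤ m^6 + 2*m^5 + 31*m^4 + 60*m^3 + 383*m^2 + 706*m + 2401 := by positivity
    have hkey : (m - 1)^2 * (m^6 + 2*m^5 + 31*m^4 + 60*m^3 + 383*m^2 + 706*m + 2401)
        = (7 + m^2)^4 - 4096*m := by ring
    nlinarith [mul_nonneg (sq_nonneg (m - 1)) hq]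
  · -- square bound
    intro s t
    set a := ‖fourierT χ μ s‖ with ha
    set b := ‖fourierT χ μ t‖ with hb
    have ha0 : 0 ≤ a := norm_nonneg _
    have hb0 : 0 ≤ b := norm_nonneg _
    have hnsqs : Complex.normSq (fourierT χ μ s) = a ^ 2 := by rw [ha, ← Complex.sq_norm]
    have hnsqt : Complex.normSq (fourierT χ μ t) = b ^ 2 := by rw [hb, ← Complex.sq_norm]
    have hkey := key4 χ μ hpos hsum s t
    rw [hnsqs, hnsqt] at hkey
    have hnn := Complex.normSq_nonneg (fourierT χ μ (s + t))
    rw [hFνre (s + t)]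
    set c := Complex.normSq (fourierT χ μ (s + t))
    nlinarith [sq_nonneg (a - b), sq_nonneg (1 - a * b), sq_nonneg (a*b)]
end
end
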